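/- arXiv:2212.14487 — 2 statements merged into one kernel-verified Lean document; each statement's English description precedes it below -/
import Mathlib

section
/- Let m be an odd natural number and ζ an m-th root of unity. Then there exists a primitive m-th root of unity η such that ζη is a primitive m-th root of unity; moreover if m > 3 one can choose η ≠ ζ. -/
open scoped Pointwise

/-- The set of all complex `m`-th roots of unity. -/
def Rset (m : ℕ) : Set ℂ := {z : ℂ | z ^ m = 1}

/-- The set of primitive complex `m`-th roots of unity. -/
def Phi (m : ℕ) : Set ℂ := {z : ℂ | IsPrimitiveRoot z m}

private lemma zmod_pp_unit {p k : ℕ} (hp : p.Prime) (hk : 0 < k) (x : ZMod (p ^ k))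
    (h : ¬ p ∣ x.val) : IsUnit x := by
  haveI : NeZero (p ^ k) := ⟨pow_ne_zero k hp.pos.ne'⟩
  rw [← ZMod.natCast_zmod_val x]
  rw [ZMod.isUnit_iff_coprime]
  exact Nat.Coprime.pow_right k ((Nat.coprime_comm.mpr (hp.coprime_iff_not_dvd.mpr h)))

private lemma zmod_pp_not_unit {p k : ℕ} (hp : p.Prime) (hk : 0 < k) (x : ZMod (p ^ k))
    (h : ¬ IsUnit x) : p ∣ x.val := by
  by_contra hc
  exact h (zmod_pp_unit hp hk x hc)

private lemma base_case (n p k : ℕ) (hn : n = p ^ k) (hp : p.Prime) (hp2 : p ≠ 2)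
    (hk : 0 < k) (a : ZMod n) :
    ∃ u : ZMod n, IsUnit u ∧ IsUnit (a + u) ∧ (3 < n → u ≠ a) := by
  subst hn
  haveI : NeZero (p ^ k) := ⟨pow_ne_zero k hp.pos.ne'⟩
  have hplt : 1 < p ^ k := Nat.one_lt_pow hk.ne' hp.one_lt
  haveI : Fact (1 < p ^ k) := ⟨hplt⟩
  have h2u : IsUnit (2 : ZMod (p ^ k)) := by
    have : ((2 : ℕ) : ZMod (p ^ k)) = 2 := by norm_num
    rw [← this, ZMod.isUnit_iff_coprime]
    refine Nat.Coprime.pow_right k ?_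
    rw [Nat.coprime_primes Nat.prime_two hp]
    exact fun h => hp2 h.symm
  by_cases ha : IsUnit a
  · by_cases hp3 : p = 3
    · -- p = 3 : take u = 4 * a
      subst hp3
      have h4u : IsUnit (4 : ZMod (3 ^ k)) := by
        have : (4 : ZMod (3 ^ k)) = 2 * 2 := by norm_num
        rw [this]; exact h2u.mul h2u
      have h5u : IsUnit (5 : ZMod (3 ^ k)) := by
        have : ((5 : ℕ) : ZMod (3 ^ k)) = 5 := by norm_num
        rw [← this, ZMod.isUnit_iff_coprime]
        refine Nat.Coprime.pow_right k ?_
        decide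
      refine ⟨4 * a, h4u.mul ha, ?_, ?_⟩
      · have : a + 4 * a = 5 * a := by ring
        rw [this]; exact h5u.mul ha
      · intro h3 heq
        have h3z : (3 : ZMod (3 ^ k)) * a = 0 := by linear_combination heq
        obtain ⟨b, hb⟩ := ha
        have : (3 : ZMod (3 ^ k)) = 0 := by
          calc (3 : ZMod (3 ^ k)) = 3 * a * (b⁻¹ : (ZMod (3^k))ˣ) := by
                rw [← hb]; rw [mul_assoc]; simp
            _ = 0 := by rw [h3z, zero_mul]
        have : ((3 : ℕ) : ZMod (3 ^ k)) = 0 := by exact_mod_cast this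
        rw [ZMod.natCast_eq_zero_iff] at this
        have := Nat.le_of_dvd (by norm_num) this
        omega
    · -- p ≥ 5 : take u = 2 * a
      have h3u : IsUnit (3 : ZMod (p ^ k)) := by
        have : ((3 : ℕ) : ZMod (p ^ k)) = 3 := by norm_num
        rw [← this, ZMod.isUnit_iff_coprime]
        refine Nat.Coprime.pow_right k ?_
        rw [Nat.coprime_primes Nat.prime_three hp]
        exact fun h => hp3 h.symm
      refine ⟨2 * a, h2u.mul ha, ?_, ?_⟩
      · have : a + 2 * a = 3 * a := by ring
        rw [this]; exact h3u.mul ha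
      · intro _ heq
        have : a = 0 := by linear_combination heq
        rw [this] at ha
        exact zero_ne_one (isUnit_zero_iff.mp ha)
  · -- a is not a unit : take u = 1
    refine ⟨1, isUnit_one, ?_, fun _ h => ha (h ▸ isUnit_one)⟩
    have hpa : p ∣ a.val := zmod_pp_not_unit hp hk a ha
    have : a + 1 = ((a.val + 1 : ℕ) : ZMod (p ^ k)) := by
      push_cast [ZMod.natCast_zmod_val]
      ring
    rw [this, ZMod.isUnit_iff_coprime]
    refine Nat.Coprime.pow_right k ?_
    rw [Nat.coprime_comm, hp.coprime_iff_not_dvd]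
    intro hdvd
    have : p ∣ 1 := (Nat.dvd_add_right hpa).mp hdvd
    exact hp.one_lt.ne' (Nat.dvd_one.mp this)

private lemma isUnit_pair {A B : Type*} [Monoid A] [Monoid B] {a : A} {b : B}
    (ha : IsUnit a) (hb : IsUnit b) : IsUnit (a, b) := by
  obtain ⟨u, rfl⟩ := ha
  obtain ⟨v, rfl⟩ := hb
  exact ⟨⟨(↑u, ↑v), (↑u⁻¹, ↑v⁻¹), by simp [Prod.ext_iff], by simp [Prod.ext_iff]⟩, rfl⟩

private lemma step_case (n m₁ m₂ : ℕ) (hn : n = m₁ * m₂) (hco : m₁.Coprime m₂)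
    (hgt : 3 < m₁ ∨ 3 < m₂)
    (H₁ : ∀ a : ZMod m₁, ∃ u : ZMod m₁, IsUnit u ∧ IsUnit (a + u) ∧ (3 < m₁ → u ≠ a))
    (H₂ : ∀ a : ZMod m₂, ∃ u : ZMod m₂, IsUnit u ∧ IsUnit (a + u) ∧ (3 < m₂ → u ≠ a))
    (a : ZMod n) :
    ∃ u : ZMod n, IsUnit u ∧ IsUnit (a + u) ∧ u ≠ a := by
  subst hn
  let e := ZMod.chineseRemainder hco
  obtain ⟨u₁, hu₁, hau₁, hne₁⟩ := H₁ (e a).1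
  obtain ⟨u₂, hu₂, hau₂, hne₂⟩ := H₂ (e a).2
  refine ⟨e.symm (u₁, u₂), ?_, ?_, ?_⟩
  · exact (isUnit_pair hu₁ hu₂).map e.symm
  · have : a + e.symm (u₁, u₂) = e.symm ((e a).1 + u₁, (e a).2 + u₂) := by
      have ha : a = e.symm (e a) := (e.symm_apply_apply a).symm
      conv_lhs => rw [ha]
      rw [← map_add]
      rfl
    rw [this]
    exact (isUnit_pair hau₁ hau₂).map e.symm
  · intro h
    have h' : (u₁, u₂) = e a := by
      have := congrArg e h
      rwa [e.apply_symm_apply] at this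
    rcases hgt with h3 | h3
    · exact hne₁ h3 (congrArg Prod.fst h')
    · exact hne₂ h3 (congrArg Prod.snd h')

private lemma key_lemma : ∀ m : ℕ, Odd m → ∀ a : ZMod m,
    ∃ u : ZMod m, IsUnit u ∧ IsUnit (a + u) ∧ (3 < m → u ≠ a) := by
  intro m
  induction m using Nat.strong_induction_on with
  | _ m IH =>
    intro hm a
    have hm0 : m ≠ 0 := by rintro rfl; simp [Nat.odd_iff] at hm
    rcases eq_or_ne m 1 with rfl | hm1
    · exact ⟨0, isUnit_of_subsingleton 0, isUnit_of_subsingleton _, by omega⟩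
    have hm1' : 1 < m := by omega
    set p := m.minFac with hpdef
    have hp : p.Prime := Nat.minFac_prime hm1
    have hpdvd : p ∣ m := Nat.minFac_dvd m
    have hp2 : p ≠ 2 := by
      intro h
      rw [h] at hpdvd
      rw [Nat.odd_iff] at hm
      obtain ⟨c, hc⟩ := hpdvd
      omega
    set k := m.factorization p with hkdef
    have hk : 0 < k := hp.factorization_pos_of_dvd hm0 hpdvd
    set m₂ := ordCompl[p] m with hm2def
    have hsplit : p ^ k * m₂ = m := Nat.ordProj_mul_ordCompl_eq_self m p
    have hm2dvd : m₂ ∣ m := Nat.ordCompl_dvd m p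
    have hppowdvd : p ^ k ∣ m := Nat.ordProj_dvd m p
    have hm2odd : Odd m₂ := by
      rcases Nat.even_or_odd m₂ with he | ho
      · exfalso
        obtain ⟨c, hc⟩ := he.two_dvd.trans hm2dvd
        rw [Nat.odd_iff] at hm
        omega
      · exact ho
    have hppodd : Odd (p ^ k) := by
      rcases Nat.even_or_odd (p ^ k) with he | ho
      · exfalso
        obtain ⟨c, hc⟩ := he.two_dvd.trans hppowdvd
        rw [Nat.odd_iff] at hm
        omega
      · exact ho
    by_cases h2 : m₂ = 1
    · have hmpk : m = p ^ k := by rw [← hsplit, h2, mul_one]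
      exact base_case m p k hmpk hp hp2 hk a
    · have hm2pos : 0 < m₂ := Nat.pos_of_dvd_of_pos hm2dvd (by omega)
      have hm2gt : 1 < m₂ := by omega
      have hpk1 : 1 < p ^ k := Nat.one_lt_pow hk.ne' hp.one_lt
      have hco : (p ^ k).Coprime m₂ :=
        Nat.Coprime.pow_left k (Nat.coprime_ordCompl hp hm0)
      have hpklt : p ^ k < m := by
        rw [← hsplit]
        nlinarith [hpk1, hm2gt]
      have hm2lt : m₂ < m := by
        rw [← hsplit]
        nlinarith [hpk1, hm2gt]
      have H₁ := IH (p ^ k) hpklt hppodd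
      have H₂ := IH m₂ hm2lt hm2odd
      have hgt : 3 < p ^ k ∨ 3 < m₂ := by
        have h1 : p ^ k % 2 = 1 := Nat.odd_iff.mp hppodd
        have h2' : m₂ % 2 = 1 := Nat.odd_iff.mp hm2odd
        by_contra hc
        push_neg at hc
        have e1 : p ^ k = 3 := by omega
        have e2 : m₂ = 3 := by omega
        rw [e1, e2] at hco
        simp [Nat.Coprime] at hco
      obtain ⟨u, h1, h2, h3⟩ :=
        step_case m (p ^ k) m₂ hsplit.symm hco hgt H₁ H₂ a
      exact ⟨u, h1, h2, fun _ => h3⟩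

theorem exists_eta_mul_primitive (m : ℕ) (hm : Odd m) (h1 : 1 ≤ m)
    (ζ : ℂ) (hζ : ζ ∈ Rset m) :
    ∃ η ∈ Phi m, ζ * η ∈ Phi m ∧ (3 < m → η ≠ ζ) := by
  haveI : NeZero m := ⟨by omega⟩
  have hμ := Complex.isPrimitiveRoot_exp m (by omega)
  obtain ⟨i, him, hiζ⟩ := hμ.eq_pow_of_pow_eq_one hζ
  obtain ⟨u, hu, hau, hne⟩ := key_lemma m hm ((i : ℕ) : ZMod m)
  have hjco : Nat.Coprime u.val m := by
    refine (ZMod.isUnit_iff_coprime u.val m).mp ?_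
    rwa [ZMod.natCast_zmod_val]
  have hsumco : Nat.Coprime (i + u.val) m := by
    refine (ZMod.isUnit_iff_coprime (i + u.val) m).mp ?_
    push_cast [ZMod.natCast_zmod_val]
    exact hau
  refine ⟨_ ^ u.val, hμ.pow_of_coprime u.val hjco, ?_, ?_⟩
  · show IsPrimitiveRoot _ m
    rw [← hiζ, ← pow_add]
    exact hμ.pow_of_coprime (i + u.val) hsumco
  · intro h3 heq
    rw [← hiζ] at heq
    have := hμ.pow_inj (ZMod.val_lt u) him heq
    apply hne h3
    rw [← this, ZMod.natCast_zmod_val]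
end

section
/- Let m > 3 be an odd natural number and let Λ₃(Φ(m)) = {η₁η₂η₃ : η₁, η₂, η₃ ∈ Φ(m) pairwise distinct}. Then either Λ₃(Φ(m)) = R(m), or m ∈ {5, 9, 15} and Λ₃(Φ(m)) = R(m) \ {1}. -/
open scoped Pointwise

/-- The set of products of three pairwise distinct primitive m-th roots of unity. -/
def Lam3 (m : ℕ) : Set ℂ :=
  {z : ℂ | ∃ a ∈ Phi m, ∃ b ∈ Phi m, ∃ c ∈ Phi m,
    a ≠ b ∧ a ≠ c ∧ b ≠ c ∧ a * b * c = z}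

set_option linter.unusedSectionVars false


/-- distinct-units triple summing to `t` -/
def G (n : ℕ) (t : ZMod n) : Prop :=
  ∃ a b c : ZMod n, IsUnit a ∧ IsUnit b ∧ IsUnit c ∧ a ≠ b ∧ a ≠ c ∧ b ≠ c ∧ a + b + c = t

/-- units triple (not nec. distinct) summing to `t` -/
def W (n : ℕ) (t : ZMod n) : Prop :=
  ∃ a b c : ZMod n, IsUnit a ∧ IsUnit b ∧ IsUnit c ∧ a + b + c = t

lemma isUnit_iff_gcd {n : ℕ} [NeZero n] (a : ZMod n) : IsUnit a ↔ Nat.gcd a.val n = 1 := by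
  rw [show a = ((a.val : ℕ) : ZMod n) from (ZMod.natCast_rightInverse a).symm,
    ZMod.isUnit_iff_coprime]
  simp [Nat.Coprime, ZMod.val_natCast]

lemma G_iff (n : ℕ) [NeZero n] (t : ZMod n) :
    G n t ↔ ∃ a b c : ZMod n,
      (Nat.gcd a.val n = 1) ∧ (Nat.gcd b.val n = 1) ∧ (Nat.gcd c.val n = 1) ∧
      a ≠ b ∧ a ≠ c ∧ b ≠ c ∧ a + b + c = t := by
  simp [G, isUnit_iff_gcd]

lemma isUnit_pair_s6 {M N : Type*} [Monoid M] [Monoid N] {x : M} {y : N}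
    (hx : IsUnit x) (hy : IsUnit y) : IsUnit ((x, y) : M × N) := by
  obtain ⟨ux, rfl⟩ := hx; obtain ⟨uy, rfl⟩ := hy
  exact ⟨⟨(ux, uy), ((ux⁻¹ : Mˣ), (uy⁻¹ : Nˣ)), by ext <;> simp, by ext <;> simp⟩, rfl⟩

lemma G_crt {m n : ℕ} (h : Nat.Coprime m n) (t : ZMod (m * n))
    (h1 : G m (ZMod.chineseRemainder h t).1) (h2 : W n (ZMod.chineseRemainder h t).2) :
    G (m * n) t := by
  set e := ZMod.chineseRemainder h with he
  obtain ⟨a1, b1, c1, ua1, ub1, uc1, hab, hac, hbc, hs1⟩ := h1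
  obtain ⟨a2, b2, c2, ua2, ub2, uc2, hs2⟩ := h2
  have hinj : Function.Injective e.symm := e.symm.injective
  refine ⟨e.symm (a1, a2), e.symm (b1, b2), e.symm (c1, c2),
    (isUnit_pair_s6 ua1 ua2).map (e.symm : ZMod m × ZMod n →+* ZMod (m * n)),
    (isUnit_pair_s6 ub1 ub2).map (e.symm : ZMod m × ZMod n →+* ZMod (m * n)),
    (isUnit_pair_s6 uc1 uc2).map (e.symm : ZMod m × ZMod n →+* ZMod (m * n)),
    fun hcon => hab (congrArg Prod.fst (hinj hcon)),
    fun hcon => hac (congrArg Prod.fst (hinj hcon)),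
    fun hcon => hbc (congrArg Prod.fst (hinj hcon)), ?_⟩
  rw [← map_add, ← map_add]
  have : ((a1, a2) : ZMod m × ZMod n) + (b1, b2) + (c1, c2) = e t := by
    rw [Prod.ext_iff]; exact ⟨hs1, hs2⟩
  rw [this, RingEquiv.symm_apply_apply]

lemma W_crt {m n : ℕ} (h : Nat.Coprime m n) (t : ZMod (m * n))
    (h1 : W m (ZMod.chineseRemainder h t).1) (h2 : W n (ZMod.chineseRemainder h t).2) :
    W (m * n) t := by
  set e := ZMod.chineseRemainder h with he
  obtain ⟨a1, b1, c1, ua1, ub1, uc1, hs1⟩ := h1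
  obtain ⟨a2, b2, c2, ua2, ub2, uc2, hs2⟩ := h2
  refine ⟨e.symm (a1, a2), e.symm (b1, b2), e.symm (c1, c2),
    (isUnit_pair_s6 ua1 ua2).map (e.symm : ZMod m × ZMod n →+* ZMod (m * n)),
    (isUnit_pair_s6 ub1 ub2).map (e.symm : ZMod m × ZMod n →+* ZMod (m * n)),
    (isUnit_pair_s6 uc1 uc2).map (e.symm : ZMod m × ZMod n →+* ZMod (m * n)), ?_⟩
  rw [← map_add, ← map_add]
  have : ((a1, a2) : ZMod m × ZMod n) + (b1, b2) + (c1, c2) = e t := by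
    rw [Prod.ext_iff]; exact ⟨hs1, hs2⟩
  rw [this, RingEquiv.symm_apply_apply]

/-- unit iff image in `ZMod q` is nonzero, for prime powers -/
lemma unit_iff_pi {q e : ℕ} (hq : q.Prime) (he : e ≠ 0) (x : ZMod (q ^ e)) :
    IsUnit x ↔ (ZMod.castHom (dvd_pow_self q he) (ZMod q) x) ≠ 0 := by
  haveI : NeZero (q ^ e) := ⟨pow_ne_zero _ hq.ne_zero⟩
  rw [show x = ((x.val : ℕ) : ZMod (q ^ e)) from (ZMod.natCast_rightInverse x).symm,
    ZMod.isUnit_iff_coprime, Nat.coprime_pow_right_iff (Nat.pos_of_ne_zero he),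
    Nat.coprime_comm, hq.coprime_iff_not_dvd,
    map_natCast, Ne, ZMod.natCast_eq_zero_iff]

lemma cast_inj_of_lt {n a b : ℕ} (ha : a < n) (hb : b < n) (h : (a : ZMod n) = b) : a = b := by
  have := congrArg ZMod.val h
  rwa [ZMod.val_cast_of_lt ha, ZMod.val_cast_of_lt hb] at this

lemma W_primePow {q e : ℕ} (hq : q.Prime) (hodd : Odd q) (he : e ≠ 0) (t : ZMod (q ^ e)) :
    W (q ^ e) t := by
  have hq2 : q ≠ 2 := by rintro rfl; exact ((Nat.not_odd_iff_even.mpr even_two)) hodd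
  have hq3 : 3 ≤ q := by
    rcases hq.two_le.lt_or_eq with h | h; omega; omega
  set π := ZMod.castHom (dvd_pow_self q he) (ZMod q) with hπ
  have h2 : IsUnit (2 : ZMod (q ^ e)) := by
    rw [unit_iff_pi hq he, map_ofNat]
    intro hcon
    have : ((2 : ℕ) : ZMod q) = 0 := by exact_mod_cast hcon
    rw [ZMod.natCast_eq_zero_iff] at this
    have := Nat.le_of_dvd (by norm_num) this
    omega
  by_cases hu : IsUnit (t - 2)
  · exact ⟨1, 1, t - 2, isUnit_one, isUnit_one, hu, by ring⟩
  · refine ⟨2, 2, t - 4, h2, h2, ?_, by ring⟩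
    rw [unit_iff_pi hq he] at hu ⊢
    rw [not_not] at hu
    have hπt : π t = 2 := by
      have := hu
      rw [map_sub, map_ofNat, sub_eq_zero] at this
      exact this
    rw [map_sub, hπt, map_ofNat]
    intro hcon
    rw [sub_eq_zero] at hcon
    have : ((4 : ℕ) : ZMod q) = ((2 : ℕ) : ZMod q) := by
      push_cast; exact hcon.symm
    rw [ZMod.natCast_eq_natCast_iff] at this
    have := (Nat.modEq_iff_dvd' (by norm_num)).mp this.symm
    have := Nat.le_of_dvd (by norm_num) this
    omega

lemma W_all : ∀ n : ℕ, Odd n → ∀ t : ZMod n, W n t := by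
  intro n
  induction n using Nat.recOnPosPrimePosCoprime with
  | prime_pow p k hp hk =>
    intro hodd t
    have : Odd p := by
      rcases hp.eq_two_or_odd' with h | h
      · exfalso
        rw [h] at hodd
        exact (Nat.not_odd_iff_even.mpr (Nat.even_pow.mpr ⟨even_two, by omega⟩)) hodd
      · exact h
    exact W_primePow hp this (by omega) t
  | zero => intro h; exact absurd h (by decide)
  | one => intro _ t; exact ⟨1, 1, 1, isUnit_one, isUnit_one, isUnit_one, Subsingleton.elim _ _⟩
  | coprime a b ha hb hab iha ihb =>
    intro hodd t
    rcases Nat.odd_mul.mp hodd with ⟨hoa, hob⟩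
    exact W_crt hab t (iha hoa _) (ihb hob _)

lemma G_prime_big {q : ℕ} (hq : q.Prime) (h11 : 11 ≤ q) (t : ZMod q) : G q t := by
  haveI : Fact q.Prime := ⟨hq⟩
  have hne : ∀ a b : ℕ, a < b → b - a < q → ((a : ZMod q) ≠ (b : ZMod q)) := by
    intro a b hab hd h
    rw [ZMod.natCast_eq_natCast_iff] at h
    have h2 := (Nat.modEq_iff_dvd' (le_of_lt hab)).mp h
    have := Nat.le_of_dvd (by omega) h2
    omega
  have hnz : ∀ b : ℕ, 0 < b → b < q → ((b : ZMod q) ≠ 0) := by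
    intro b hb hbq h
    exact hne 0 b hb hbq (by exact_mod_cast h.symm)
  have hunit : ∀ x : ZMod q, x ≠ 0 → IsUnit x := fun x hx => isUnit_iff_ne_zero.mpr hx
  by_cases h3 : t = ((3 : ℕ) : ZMod q) ∨ t = ((4 : ℕ) : ZMod q) ∨ t = ((5 : ℕ) : ZMod q)
  · -- use (3, 4, t - 7)
    refine ⟨((3:ℕ) : ZMod q), ((4:ℕ) : ZMod q), t - ((7:ℕ) : ZMod q),
      hunit _ (hnz 3 (by norm_num) (by omega)), hunit _ (hnz 4 (by norm_num) (by omega)),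
      hunit _ ?_, hne 3 4 (by norm_num) (by omega), ?_, ?_, ?_⟩
    · intro h
      rw [sub_eq_zero] at h
      rcases h3 with h3 | h3 | h3 <;> rw [h3] at h <;>
        [exact hne 3 7 (by norm_num) (by omega) h;
         exact hne 4 7 (by norm_num) (by omega) h;
         exact hne 5 7 (by norm_num) (by omega) h]
    · intro h
      have h' : t = ((10:ℕ) : ZMod q) := by
        have := h.symm
        rw [sub_eq_iff_eq_add] at this
        rw [this]; push_cast; ring
      rcases h3 with h3 | h3 | h3 <;> rw [h3] at h' <;>
        [exact hne 3 10 (by norm_num) (by omega) h';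
         exact hne 4 10 (by norm_num) (by omega) h';
         exact hne 5 10 (by norm_num) (by omega) h']
    · intro h
      have h' : t = ((11:ℕ) : ZMod q) := by
        have := h.symm
        rw [sub_eq_iff_eq_add] at this
        rw [this]; push_cast; ring
      rcases h3 with h3 | h3 | h3 <;> rw [h3] at h' <;>
        [exact hne 3 11 (by norm_num) (by omega) h';
         exact hne 4 11 (by norm_num) (by omega) h';
         exact hne 5 11 (by norm_num) (by omega) h']
    · push_cast; ring
  · -- use (1, 2, t - 3)
    push_neg at h3
    obtain ⟨ht3, ht4, ht5⟩ := h3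
    refine ⟨((1:ℕ) : ZMod q), ((2:ℕ) : ZMod q), t - ((3:ℕ) : ZMod q),
      hunit _ (hnz 1 (by norm_num) (by omega)), hunit _ (hnz 2 (by norm_num) (by omega)),
      hunit _ ?_, hne 1 2 (by norm_num) (by omega), ?_, ?_, ?_⟩
    · intro h; rw [sub_eq_zero] at h; exact ht3 h
    · intro h
      apply ht4
      have := h.symm
      rw [sub_eq_iff_eq_add] at this
      rw [this]; push_cast; ring
    · intro h
      apply ht5
      have := h.symm
      rw [sub_eq_iff_eq_add] at this
      rw [this]; push_cast; ring
    · push_cast; ring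

lemma G_lift {q e f : ℕ} (hq : q.Prime) (he : e ≠ 0) (hef : e ≤ f) (t : ZMod (q ^ f))
    (h : G (q ^ e) (ZMod.castHom (pow_dvd_pow q hef) (ZMod (q ^ e)) t)) : G (q ^ f) t := by
  have hf : f ≠ 0 := by omega
  haveI : NeZero (q ^ e) := ⟨pow_ne_zero _ hq.ne_zero⟩
  haveI : NeZero (q ^ f) := ⟨pow_ne_zero _ hq.ne_zero⟩
  obtain ⟨a, b, c, ua, ub, uc, hab, hac, hbc, hsum⟩ := h
  set π := ZMod.castHom (pow_dvd_pow q hef) (ZMod (q ^ e)) with hπdef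
  set a' : ZMod (q ^ f) := ((a.val : ℕ) : ZMod (q ^ f)) with ha'
  set b' : ZMod (q ^ f) := ((b.val : ℕ) : ZMod (q ^ f)) with hb'
  set c' : ZMod (q ^ f) := t - a' - b' with hc'
  have hπa : π a' = a := by rw [ha', map_natCast]; exact ZMod.natCast_rightInverse a
  have hπb : π b' = b := by rw [hb', map_natCast]; exact ZMod.natCast_rightInverse b
  have hπc : π c' = c := by
    rw [hc', map_sub, map_sub, hπa, hπb, ← hsum]; ring
  -- unit transfer between exponents via coprimality with q
  have unit_iff : ∀ (g : ℕ) (hg : g ≠ 0) (m : ℕ),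
      IsUnit ((m : ℕ) : ZMod (q ^ g)) ↔ m.Coprime q := by
    intro g hg m
    rw [ZMod.isUnit_iff_coprime, Nat.coprime_pow_right_iff (Nat.pos_of_ne_zero hg)]
  have ua' : IsUnit a' := by
    rw [ha', unit_iff f hf]
    rw [show a = ((a.val : ℕ) : ZMod (q ^ e)) from (ZMod.natCast_rightInverse a).symm,
      unit_iff e he] at ua
    exact ua
  have ub' : IsUnit b' := by
    rw [hb', unit_iff f hf]
    rw [show b = ((b.val : ℕ) : ZMod (q ^ e)) from (ZMod.natCast_rightInverse b).symm,
      unit_iff e he] at ub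
    exact ub
  have uc' : IsUnit c' := by
    rw [unit_iff_pi hq hf]
    rw [unit_iff_pi hq he] at uc
    intro hcon
    apply uc
    have hcomp : (ZMod.castHom (dvd_pow_self q he) (ZMod q)).comp π
        = ZMod.castHom (dvd_pow_self q hf) (ZMod q) := by
      rw [hπdef, ZMod.castHom_comp]
    calc ZMod.castHom (dvd_pow_self q he) (ZMod q) c
        = ZMod.castHom (dvd_pow_self q he) (ZMod q) (π c') := by rw [hπc]
      _ = (ZMod.castHom (dvd_pow_self q he) (ZMod q)).comp π c' := rfl
      _ = ZMod.castHom (dvd_pow_self q hf) (ZMod q) c' := by rw [hcomp]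
      _ = 0 := hcon
  exact ⟨a', b', c', ua', ub', uc',
    fun h => hab (by rw [← hπa, ← hπb, h]),
    fun h => hac (by rw [← hπa, ← hπc, h]),
    fun h => hbc (by rw [← hπb, ← hπc, h]),
    by rw [hc']; ring⟩

lemma G7 : ∀ t : ZMod 7, G 7 t := by simp only [G_iff]; decide
lemma G25 : ∀ t : ZMod 25, G 25 t := by simp only [G_iff]; decide
lemma G27 : ∀ t : ZMod 27, G 27 t := by simp only [G_iff]; decide
lemma G5nz : ∀ t : ZMod 5, t ≠ 0 → G 5 t := by simp only [G_iff]; decide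
lemma G9nz : ∀ t : ZMod 9, t ≠ 0 → G 9 t := by simp only [G_iff]; decide
lemma G15nz : ∀ t : ZMod 15, t ≠ 0 → G 15 t := by simp only [G_iff]; decide
lemma notG5 : ¬ G 5 0 := by rw [G_iff]; decide
lemma notG9 : ¬ G 9 0 := by rw [G_iff]; decide
lemma notG15 : ¬ G 15 0 := by rw [G_iff]; decide

lemma G_compGood {q e : ℕ} (hq : q.Prime) (hodd : Odd q) (he : e ≠ 0)
    (h3 : q ^ e ≠ 3) (h5 : q ^ e ≠ 5) (h9 : q ^ e ≠ 9) (t : ZMod (q ^ e)) : G (q ^ e) t := by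
  by_cases h11 : 11 ≤ q
  · have base : ∀ s : ZMod (q ^ 1), G (q ^ 1) s := by
      rw [pow_one]; exact G_prime_big hq h11
    exact G_lift hq one_ne_zero (by omega) t (base _)
  · have h2 := hq.two_le
    have hq37 : q = 3 ∨ q = 5 ∨ q = 7 := by
      interval_cases q <;> revert hq hodd <;> decide
    rcases hq37 with rfl | rfl | rfl
    · have he3 : 3 ≤ e := by
        rcases Nat.lt_or_ge e 3 with h | h
        · interval_cases e <;> first | exact absurd rfl he | (norm_num at h3; done) | norm_num at h9
        · exact h
      have base : ∀ s : ZMod (3 ^ 3), G (3 ^ 3) s := by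
        rw [show (3:ℕ) ^ 3 = 27 by norm_num]; exact G27
      exact G_lift hq (by norm_num) he3 t (base _)
    · have he2 : 2 ≤ e := by
        rcases Nat.lt_or_ge e 2 with h | h
        · interval_cases e <;> first | exact absurd rfl he | norm_num at h5
        · exact h
      have base : ∀ s : ZMod (5 ^ 2), G (5 ^ 2) s := by
        rw [show (5:ℕ) ^ 2 = 25 by norm_num]; exact G25
      exact G_lift hq (by norm_num) he2 t (base _)
    · have base : ∀ s : ZMod (7 ^ 1), G (7 ^ 1) s := by
        rw [pow_one]; exact G7
      exact G_lift hq one_ne_zero (by omega) t (base _)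

lemma G_of_decomp {M : ℕ} (t : ZMod M) (Q R : ℕ) (h : Nat.Coprime Q R) (hQR : Q * R = M)
    (hG : ∀ s : ZMod Q, G Q s) (hW : ∀ s : ZMod R, W R s) : G M t := by
  subst hQR
  exact G_crt h t (hG _) (hW _)

lemma W5 : ∀ s : ZMod 5, W 5 s := fun s => W_all 5 (by decide) s
lemma W9 : ∀ s : ZMod 9, W 9 s := fun s => W_all 9 (by decide) s

lemma G45 : ∀ t : ZMod 45, G 45 t := by
  intro t
  by_cases h0 : t = 0
  · subst h0
    refine ⟨1, 7, 37, ?_, ?_, ?_, by decide, by decide, by decide, by decide⟩ <;>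
      · rw [isUnit_iff_gcd]; decide
  · have h95 : Nat.Coprime 9 5 := by norm_num
    have h59 : Nat.Coprime 5 9 := by norm_num
    by_cases h1 : (ZMod.chineseRemainder h95 (show ZMod (9*5) from t)).1 = 0
    · -- second component nonzero
      have h2 : (ZMod.chineseRemainder h95 (show ZMod (9*5) from t)).2 ≠ 0 := by
        intro h2
        apply h0
        have : ZMod.chineseRemainder h95 (show ZMod (9*5) from t) = 0 := by
          rw [Prod.ext_iff]; exact ⟨h1, h2⟩
        have := congrArg (ZMod.chineseRemainder h95).symm this
        rwa [RingEquiv.symm_apply_apply, map_zero] at this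
      have key : (ZMod.chineseRemainder h59 (show ZMod (5*9) from t)).1
          = (ZMod.chineseRemainder h95 (show ZMod (9*5) from t)).2 := by
        rfl
      exact G_crt h59 (show ZMod (5*9) from t) (key ▸ G5nz _ (key ▸ h2)) (W9 _)
    · exact G_crt h95 (show ZMod (9*5) from t) (G9nz _ h1) (W5 _)

theorem G_main (M : ℕ) (hModd : Odd M) (hM3 : 3 < M) (t : ZMod M)
    (ht : (M = 5 ∨ M = 9 ∨ M = 15) → t ≠ 0) : G M t := by
  have hM0 : M ≠ 0 := by omega
  by_cases hgood : ∃ q : ℕ, q.Prime ∧ q ∣ M ∧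
      q ^ M.factorization q ≠ 3 ∧ q ^ M.factorization q ≠ 5 ∧ q ^ M.factorization q ≠ 9
  · obtain ⟨q, hq, hqM, h3, h5, h9⟩ := hgood
    have he : M.factorization q ≠ 0 := (Nat.Prime.factorization_pos_of_dvd hq hM0 hqM).ne'
    have hqodd : Odd q := hq.odd_of_ne_two (by
      rintro rfl
      exact (Nat.not_even_iff_odd.mpr hModd) ((even_iff_two_dvd).mpr hqM))
    have hRodd : Odd (ordCompl[q] M) := by
      rcases Nat.even_or_odd (ordCompl[q] M) with hE | hO
      · obtain ⟨k, hk⟩ := Nat.ordCompl_dvd M q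
        exact absurd (by rw [hk]; exact hE.mul_right k) (Nat.not_even_iff_odd.mpr hModd)
      · exact hO
    exact G_of_decomp t (q ^ M.factorization q) (ordCompl[q] M)
      ((Nat.coprime_ordCompl hq hM0).pow_left _)
      (Nat.ordProj_mul_ordCompl_eq_self M q)
      (fun s => G_compGood hq hqodd he h3 h5 h9 s)
      (fun s => W_all _ hRodd s)
  · push_neg at hgood
    have hdvd : M ∣ 45 := by
      rw [← Nat.factorization_le_iff_dvd hM0 (by norm_num)]
      intro p
      rcases Nat.eq_zero_or_pos (M.factorization p) with hp0 | hppos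
      · simp [hp0]
      · have hpsupp : p ∈ M.primeFactors := by
          rw [← Nat.support_factorization, Finsupp.mem_support_iff]
          omega
        have hpp : p.Prime := Nat.prime_of_mem_primeFactors hpsupp
        have hpM : p ∣ M := Nat.dvd_of_mem_primeFactors hpsupp
        have hC : p ^ M.factorization p = 3 ∨ p ^ M.factorization p = 5 ∨
            p ^ M.factorization p = 9 := by
          by_cases h3 : p ^ M.factorization p = 3
          · exact Or.inl h3
          by_cases h5 : p ^ M.factorization p = 5
          · exact Or.inr (Or.inl h5)
          · exact Or.inr (Or.inr (hgood p hpp hpM h3 h5))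
        have hC45 : p ^ M.factorization p ∣ 45 := by
          rcases hC with h | h | h <;> rw [h] <;> norm_num
        exact (Nat.Prime.pow_dvd_iff_le_factorization hpp (by norm_num)).mp hC45
    have hM' : M = 5 ∨ M = 9 ∨ M = 15 ∨ M = 45 := by
      have h45 := Nat.le_of_dvd (by norm_num) hdvd
      interval_cases M <;> revert hdvd <;> decide
    rcases hM' with rfl | rfl | rfl | rfl
    · exact G5nz t (ht (by tauto))
    · exact G9nz t (ht (by tauto))
    · exact G15nz t (ht (by tauto))
    · exact G45 t

section Bridge

variable {m : ℕ} {ζ : ℂ} (hζ : IsPrimitiveRoot ζ m) [NeZero m]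

noncomputable def F (ζ : ℂ) (t : ZMod m) : ℂ := ζ ^ t.val

include hζ

lemma F_inj : Function.Injective (F (m := m) ζ) := by
  intro a b h
  have := hζ.pow_inj (ZMod.val_lt a) (ZMod.val_lt b) h
  exact ZMod.val_injective m this

lemma pow_mod_eq (x : ℕ) : ζ ^ (x % m) = ζ ^ x := by
  conv_rhs => rw [← Nat.mod_add_div x m, pow_add, pow_mul, hζ.pow_eq_one, one_pow, mul_one]

lemma F_add (a b : ZMod m) : F ζ (a + b) = F ζ a * F ζ b := by
  unfold F
  rw [ZMod.val_add, pow_mod_eq hζ, pow_add]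

lemma Rset_eq : Rset m = Set.range (F (m := m) ζ) := by
  ext z
  constructor
  · intro hz
    obtain ⟨i, him, hi⟩ := hζ.eq_pow_of_pow_eq_one hz
    exact ⟨(i : ZMod m), by rw [F, ZMod.val_cast_of_lt him]; exact hi⟩
  · rintro ⟨t, rfl⟩
    show (ζ ^ t.val) ^ m = 1
    rw [← pow_mul, mul_comm, pow_mul, hζ.pow_eq_one, one_pow]

lemma Phi_eq : Phi m = F (m := m) ζ '' {t : ZMod m | IsUnit t} := by
  ext z
  constructor
  · intro hz
    obtain ⟨i, him, hcop, hi⟩ := (hζ.isPrimitiveRoot_iff).mp hz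
    refine ⟨(i : ZMod m), ?_, by rw [F, ZMod.val_cast_of_lt him]; exact hi⟩
    exact (ZMod.isUnit_iff_coprime i m).mpr hcop
  · rintro ⟨t, ht, rfl⟩
    have hcop : Nat.Coprime t.val m := by
      have ht' : IsUnit ((t.val : ℕ) : ZMod m) := by
        rw [ZMod.natCast_rightInverse t]; exact ht
      exact (ZMod.isUnit_iff_coprime _ _).mp ht'
    exact hζ.pow_of_coprime t.val hcop

lemma Lam3_eq_image : Lam3 m = F (m := m) ζ '' {t : ZMod m | G m t} := by
  ext z
  constructor
  · rintro ⟨a, ha, b, hb, c, hc, hab, hac, hbc, rfl⟩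
    rw [Phi_eq hζ] at ha hb hc
    obtain ⟨ta, hta, rfl⟩ := ha
    obtain ⟨tb, htb, rfl⟩ := hb
    obtain ⟨tc, htc, rfl⟩ := hc
    refine ⟨ta + tb + tc, ⟨ta, tb, tc, hta, htb, htc,
      fun h => hab (congrArg _ h), fun h => hac (congrArg _ h),
      fun h => hbc (congrArg _ h), rfl⟩, ?_⟩
    rw [F_add hζ, F_add hζ]
  · rintro ⟨t, ⟨ta, tb, tc, hta, htb, htc, hab, hac, hbc, rfl⟩, rfl⟩
    refine ⟨F ζ ta, ?_, F ζ tb, ?_, F ζ tc, ?_,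
      fun h => hab (F_inj hζ h), fun h => hac (F_inj hζ h), fun h => hbc (F_inj hζ h), ?_⟩
    · rw [Phi_eq hζ]; exact ⟨ta, hta, rfl⟩
    · rw [Phi_eq hζ]; exact ⟨tb, htb, rfl⟩
    · rw [Phi_eq hζ]; exact ⟨tc, htc, rfl⟩
    · rw [F_add hζ, F_add hζ]

end Bridge


theorem Lam3_eq (m : ℕ) (hm : Odd m) (h3 : 3 < m) :
    Lam3 m = Rset m ∨ (m ∈ ({5, 9, 15} : Set ℕ) ∧ Lam3 m = Rset m \ {1}) := by
  haveI : NeZero m := ⟨by omega⟩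
  obtain ⟨ζ, hζ⟩ : ∃ ζ : ℂ, IsPrimitiveRoot ζ m :=
    ⟨_, Complex.isPrimitiveRoot_exp m (by omega)⟩
  by_cases hex : m = 5 ∨ m = 9 ∨ m = 15
  · right
    refine ⟨by simpa [Set.mem_insert_iff] using hex, ?_⟩
    rw [Lam3_eq_image hζ, Rset_eq hζ]
    have hset : {t : ZMod m | G m t} = Set.univ \ {0} := by
      ext t
      simp only [Set.mem_setOf_eq, Set.mem_diff, Set.mem_univ, Set.mem_singleton_iff, true_and]
      constructor
      · intro hG h0
        subst h0
        rcases hex with rfl | rfl | rfl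
        exacts [notG5 hG, notG9 hG, notG15 hG]
      · intro h0
        exact G_main m hm h3 t (fun _ => h0)
    rw [hset, Set.image_diff (F_inj hζ), Set.image_univ]
    congr 1
    rw [Set.image_singleton]
    congr 1
    show ζ ^ (0 : ZMod m).val = 1
    rw [ZMod.val_zero, pow_zero]
  · left
    rw [Lam3_eq_image hζ, Rset_eq hζ]
    have hset : {t : ZMod m | G m t} = Set.univ := by
      ext t; simp only [Set.mem_setOf_eq, Set.mem_univ, iff_true]
      exact G_main m hm h3 t (fun h => absurd h hex)
    rw [hset, Set.image_univ]
end
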